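/- Let λ > 0 and let q : ℝ → Quaternion ℝ be differentiable with ‖q(t)‖ = 1 for all t and satisfy q'(t) = (1/2) · q(t) * ⟦−λ · sgn₊(q°(t)) · q⃗(t)⟧. Then the function V(t) = ‖q⃗(t)‖² is differentiable with V'(t) = −λ · |q°(t)| · ‖q⃗(t)‖² for all t. -/

import Mathlib

noncomputable section

/-- `sgn₊ x = 1` if `x ≥ 0` and `-1` if `x < 0`. -/
def sgnPlus (x : ℝ) : ℝ := if 0 ≤ x then 1 else -1

/-- The vector (imaginary) part of a quaternion, as a vector in Euclidean `ℝ³`. -/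
def vecPart (p : Quaternion ℝ) : EuclideanSpace ℝ (Fin 3) := WithLp.toLp 2 ![p.imI, p.imJ, p.imK]

/-- The pure-imaginary quaternion `⟦v⟧` with vector part `v`. -/
def quatOfVec (v : EuclideanSpace ℝ (Fin 3)) : Quaternion ℝ := ⟨0, v 0, v 1, v 2⟩

/-! The error quaternion moves, in its vector part, along `q⃗` itself: since `q⃗ × q⃗ = 0`, the
dynamics give `(q')⃗ = ½ c q° q⃗` with `c = -λ sgn₊ q°`, so `(‖q⃗‖²)' = 2 ⟪q⃗, (q')⃗⟫ = c q° ‖q⃗‖²`,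
and `sgn₊ q° · q° = |q°|`. -/

theorem sgnPlus_mul_self (x : ℝ) : sgnPlus x * x = |x| := by
  unfold sgnPlus
  split_ifs with hx
  · rw [one_mul, abs_of_nonneg hx]
  · rw [neg_one_mul, abs_of_neg (not_le.mp hx)]

def vecPartLinearMap : Quaternion ℝ →ₗ[ℝ] EuclideanSpace ℝ (Fin 3) where
  toFun := vecPart
  map_add' p p' := by ext i; fin_cases i <;> rfl
  map_smul' c p := by ext i; fin_cases i <;> rfl

theorem vecPart_smul (c : ℝ) (p : Quaternion ℝ) : vecPart (c • p) = c • vecPart p :=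
  vecPartLinearMap.map_smul c p

theorem hasDerivAt_vecPart_comp {q : ℝ → Quaternion ℝ} {q' : Quaternion ℝ} {t : ℝ}
    (hq : HasDerivAt q q' t) : HasDerivAt (fun τ => vecPart (q τ)) (vecPart q') t :=
  (LinearMap.toContinuousLinearMap vecPartLinearMap).hasFDerivAt.comp_hasDerivAt t hq

theorem vecPart_mul_quatOfVec_smul_vecPart (c : ℝ) (p : Quaternion ℝ) :
    vecPart (p * quatOfVec (c • vecPart p)) = (c * p.re) • vecPart p := by
  ext i
  fin_cases i <;>
    simp only [vecPart, Quaternion.imI_mul, Quaternion.imJ_mul, Quaternion.imK_mul] <;>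
    simp [quatOfVec] <;>
    ring

theorem hasDerivAt_norm_vecPart_sq_of_vecPart_eq_smul {q : ℝ → Quaternion ℝ} {q' : Quaternion ℝ}
    {t μ : ℝ} (hq : HasDerivAt q q' t) (hq' : vecPart q' = μ • vecPart (q t)) :
    HasDerivAt (fun τ => ‖vecPart (q τ)‖ ^ 2) (2 * μ * ‖vecPart (q t)‖ ^ 2) t := by
  convert (hasDerivAt_vecPart_comp hq).norm_sq using 1
  rw [hq', inner_smul_right, real_inner_self_eq_norm_sq, mul_assoc]

theorem lyapunov_identity_sliding_surface_general
    (lam : ℝ) (q : ℝ → Quaternion ℝ)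
    (hq : Differentiable ℝ q)
    (hdyn : ∀ t : ℝ, deriv q t =
      (1 / 2 : ℝ) • (q t * quatOfVec ((-(lam * sgnPlus (q t).re)) • vecPart (q t)))) :
    ∀ t : ℝ, HasDerivAt (fun τ => ‖vecPart (q τ)‖ ^ 2)
      (-(lam * |(q t).re| * ‖vecPart (q t)‖ ^ 2)) t := by
  intro t
  have hvec : vecPart (deriv q t) = (1 / 2 * (-(lam * sgnPlus (q t).re) * (q t).re)) •
      vecPart (q t) := by
    rw [hdyn, vecPart_smul, vecPart_mul_quatOfVec_smul_vecPart, smul_smul]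
  convert hasDerivAt_norm_vecPart_sq_of_vecPart_eq_smul (hq t).hasDerivAt hvec using 1
  rw [← sgnPlus_mul_self]
  ring

theorem lyapunov_identity_sliding_surface
    (lam : ℝ) (hlam : 0 < lam) (q : ℝ → Quaternion ℝ)
    (hq : Differentiable ℝ q)
    (hunit : ∀ t : ℝ, ‖q t‖ = 1)
    (hdyn : ∀ t : ℝ, deriv q t =
      (1 / 2 : ℝ) • (q t * quatOfVec ((-(lam * sgnPlus (q t).re)) • vecPart (q t)))) :
    ∀ t : ℝ, HasDerivAt (fun τ => ‖vecPart (q τ)‖ ^ 2)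
      (-(lam * |(q t).re| * ‖vecPart (q t)‖ ^ 2)) t :=
  lyapunov_identity_sliding_surface_general lam q hq hdyn
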